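/- arXiv:math/0007138 — 7 statements merged into one kernel-verified Lean document; each statement's English description precedes it below -/
import Mathlib

section
/- For a Jacobi manifold (M, Λ, E), the Jacobi bracket {f,g} = Λ(df,dg) + f E(g) - g E(f) satisfies the Jacobi identity {f,{g,h}} + {g,{h,f}} + {h,{f,g}} = 0, making (C^∞(M), {,}) a Lie algebra. -/
/-- For a Jacobi manifold `(M, Λ, E)` (with `Λ` a bivector field and `E`
a vector field satisfying `[Λ,Λ]_SN = 2E∧Λ` and `[E,Λ]_SN = 0`, expressed here evaluated
on functions), the Jacobi bracket `{f,g} = Λ(df,dg) + f E(g) - g E(f)` satisfies the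
Jacobi identity `{f,{g,h}} + {g,{h,f}} + {h,{f,g}} = 0`; together with its
ℝ-bilinearity and skew-symmetry this makes `(C^∞(M), {,})` a Lie algebra. -/
theorem jacobi_bracket_jacobi_identity
    {R : Type*} [CommRing R] [Algebra ℝ R]
    (Λ : R → R → R) (E : R → R)
    (hΛ_addl : ∀ f g h : R, Λ (f + g) h = Λ f h + Λ g h)
    (hΛ_addr : ∀ f g h : R, Λ f (g + h) = Λ f g + Λ f h)
    (hΛ_skew : ∀ f g : R, Λ f g = - Λ g f)
    (hΛ_leib : ∀ f g h : R, Λ f (g * h) = g * Λ f h + h * Λ f g)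
    (hE_add : ∀ f g : R, E (f + g) = E f + E g)
    (hE_leib : ∀ f g : R, E (f * g) = f * E g + g * E f)
    -- `[Λ,Λ]_SN = 2 E ∧ Λ`, evaluated on triples of functions
    (hSN1 : ∀ f g h : R,
      2 * (Λ (Λ f g) h + Λ (Λ g h) f + Λ (Λ h f) g)
        = 2 * (E f * Λ g h + E g * Λ h f + E h * Λ f g))
    -- `[E,Λ]_SN = 0`, evaluated on pairs of functions
    (hSN2 : ∀ f g : R, E (Λ f g) - Λ (E f) g - Λ f (E g) = 0)
    (jb : R → R → R)
    (hjb : ∀ f g : R, jb f g = Λ f g + f * E g - g * E f)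
    (f g h : R) :
    jb f (jb g h) + jb g (jb h f) + jb h (jb f g) = 0 := by
  -- cancel the 2 using the ℝ-algebra structure
  have htwo : ∀ x y : R, 2 * x = 2 * y → x = y := by
    intro x y hxy
    have h2 : (algebraMap ℝ R (1/2)) * 2 = 1 := by
      rw [show (2:R) = algebraMap ℝ R 2 by simp [map_ofNat]]
      rw [← map_mul]
      norm_num
    calc x = (algebraMap ℝ R (1/2) * 2) * x := by rw [h2, one_mul]
    _ = algebraMap ℝ R (1/2) * (2 * x) := by ring
    _ = algebraMap ℝ R (1/2) * (2 * y) := by rw [hxy]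
    _ = (algebraMap ℝ R (1/2) * 2) * y := by ring
    _ = y := by rw [h2, one_mul]
  have hSN1' : Λ (Λ f g) h + Λ (Λ g h) f + Λ (Λ h f) g
      = E f * Λ g h + E g * Λ h f + E h * Λ f g := htwo _ _ (hSN1 f g h)
  have hSN2' : ∀ a b : R, E (Λ a b) = Λ (E a) b + Λ a (E b) := by
    intro a b
    linear_combination hSN2 a b
  have hΛ0 : ∀ x : R, Λ x 0 = 0 := by
    intro x
    have h0 := hΛ_addr x 0 0
    rw [add_zero] at h0
    exact (add_left_cancel (a := Λ x 0) (by rw [add_zero]; exact h0)).symm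
  have hΛ_subr : ∀ x a b : R, Λ x (a - b) = Λ x a - Λ x b := by
    intro x a b
    have h0 := hΛ_addr x (a - b) b
    rw [sub_add_cancel] at h0
    exact eq_sub_of_add_eq h0.symm
  have hE0 : E 0 = 0 := by
    have h0 := hE_add 0 0
    rw [add_zero] at h0
    exact (add_left_cancel (a := E 0) (by rw [add_zero]; exact h0)).symm
  have hE_sub : ∀ a b : R, E (a - b) = E a - E b := by
    intro a b
    have h0 := hE_add (a - b) b
    rw [sub_add_cancel] at h0
    exact eq_sub_of_add_eq h0.symm
  have hSN1'' : Λ f (Λ g h) + Λ g (Λ h f) + Λ h (Λ f g)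
      = -(E f * Λ g h + E g * Λ h f + E h * Λ f g) := by
    linear_combination -hSN1' + hΛ_skew (Λ g h) f + hΛ_skew (Λ h f) g + hΛ_skew (Λ f g) h
  have hSN2'' : ∀ a b : R, E (Λ a b) = Λ a (E b) - Λ b (E a) := by
    intro a b
    linear_combination hSN2 a b + hΛ_skew (E a) b
  simp only [hjb, hΛ_addr, hΛ_subr, hΛ_leib, hE_add, hE_sub, hE_leib]
  linear_combination hSN1'' + f * hSN2'' g h + g * hSN2'' h f + h * hSN2'' f g
    - (E h) * hΛ_skew g f - (E g) * hΛ_skew f h - (E f) * hΛ_skew h g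
end

section
/- Let (A, [[,]], ρ) be a Lie algebroid over M, φ ∈ Γ(A*) a 1-cocycle, Λ_{A*} the linear Poisson bivector on A*, Δ the Liouville (Euler) vector field on A*, and φ^v the vertical lift of φ. Then the pair Λ = Λ_{A*} + Δ ∧ φ^v, E = -φ^v satisfies [Λ,Λ]_{SN} = 2E ∧ Λ and [E,Λ]_{SN} = 0, i.e. it is a Jacobi structure on A*. -/
/-- **Theorem 1 of the paper, structure equations.**  Let `(A, [[,]], ρ)`
be a Lie algebroid over `M` (algebraically: `R = C^∞(M)`, `L = Γ(A)`, `S` the algebra of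
functions on `A*`, generated by the basic functions `i f` and the fibrewise-linear
functions `j μ`), `φ ∈ Γ(A*)` a 1-cocycle, `Λ₀ = Λ_{A*}` the linear Poisson bivector of
the Lie algebroid, `Δ` the Liouville vector field of `A*` and `φ^v` the vertical lift of
`φ`.  Then the pair `Λ = Λ_{A*} + Δ ∧ φ^v`, `E = -φ^v` satisfies `[Λ,Λ]_SN = 2 E ∧ Λ`
and `[E,Λ]_SN = 0` (expressed evaluated on functions), i.e. it is a Jacobi structure
on `A*`. -/
theorem algebroid_cocycle_gives_jacobi_structure
    {R : Type*} [CommRing R] [Algebra ℝ R]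
    {L : Type*} [AddCommGroup L] [Module R L]
    {S : Type*} [CommRing S] [Algebra ℝ S]
    (br : L → L → L) (ρ : L → R → R)
    (hbr_addl : ∀ μ₁ μ₂ η : L, br (μ₁ + μ₂) η = br μ₁ η + br μ₂ η)
    (hbr_addr : ∀ μ η₁ η₂ : L, br μ (η₁ + η₂) = br μ η₁ + br μ η₂)
    (hbr_alt : ∀ μ : L, br μ μ = 0)
    (hbr_jac : ∀ μ η ζ : L, br μ (br η ζ) + br η (br ζ μ) + br ζ (br μ η) = 0)
    (hρ_add : ∀ (μ₁ μ₂ : L) (f : R), ρ (μ₁ + μ₂) f = ρ μ₁ f + ρ μ₂ f)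
    (hρ_lin : ∀ (f : R) (μ : L) (g : R), ρ (f • μ) g = f * ρ μ g)
    (hρ_der_add : ∀ (μ : L) (f g : R), ρ μ (f + g) = ρ μ f + ρ μ g)
    (hρ_der_mul : ∀ (μ : L) (f g : R), ρ μ (f * g) = f * ρ μ g + g * ρ μ f)
    (hρ_hom : ∀ (μ η : L) (f : R), ρ (br μ η) f = ρ μ (ρ η f) - ρ η (ρ μ f))
    (hleib : ∀ (μ : L) (f : R) (η : L), br μ (f • η) = f • br μ η + ρ μ f • η)
    (φ : L → R)
    (hφ_add : ∀ μ η : L, φ (μ + η) = φ μ + φ η)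
    (hφ_lin : ∀ (f : R) (μ : L), φ (f • μ) = f * φ μ)
    (hcoc : ∀ μ η : L, φ (br μ η) = ρ μ (φ η) - ρ η (φ μ))
    (i : R →ₐ[ℝ] S) (j : L →+ S)
    (hj : ∀ (f : R) (μ : L), j (f • μ) = i f * j μ)
    (hgen : Algebra.adjoin ℝ (Set.range i ∪ Set.range j) = ⊤)
    -- the linear Poisson bivector `Λ_{A*}` of the Lie algebroid, as a skew biderivation
    (Λ₀ : S → S → S)
    (hΛ₀_addl : ∀ F G H : S, Λ₀ (F + G) H = Λ₀ F H + Λ₀ G H)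
    (hΛ₀_addr : ∀ F G H : S, Λ₀ F (G + H) = Λ₀ F G + Λ₀ F H)
    (hΛ₀_skew : ∀ F G : S, Λ₀ F G = - Λ₀ G F)
    (hΛ₀_leib : ∀ F G H : S, Λ₀ F (G * H) = G * Λ₀ F H + H * Λ₀ F G)
    (hΛ₀jj : ∀ μ η : L, Λ₀ (j μ) (j η) = j (br μ η))
    (hΛ₀jf : ∀ (μ : L) (f : R), Λ₀ (j μ) (i f) = i (ρ μ f))
    (hΛ₀ff : ∀ f g : R, Λ₀ (i f) (i g) = 0)
    -- the Liouville vector field `Δ` and the vertical lift `φ^v`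
    (Δ φv : Derivation ℝ S S)
    (hΔi : ∀ f : R, Δ (i f) = 0) (hΔj : ∀ μ : L, Δ (j μ) = j μ)
    (hφvi : ∀ f : R, φv (i f) = 0) (hφvj : ∀ μ : L, φv (j μ) = i (φ μ))
    (Λ : S → S → S) (E : S → S)
    (hΛ : ∀ F G : S, Λ F G = Λ₀ F G + (Δ F * φv G - Δ G * φv F))
    (hE : ∀ F : S, E F = - φv F) :
    (∀ F G H : S,
      2 * (Λ (Λ F G) H + Λ (Λ G H) F + Λ (Λ H F) G)
        = 2 * (E F * Λ G H + E G * Λ H F + E H * Λ F G)) ∧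
    (∀ F G : S, E (Λ F G) - Λ (E F) G - Λ F (E G) = 0) := by
  -- induction principle from hgen
  have hind : ∀ (P : S → Prop), (∀ f, P (i f)) → (∀ μ, P (j μ)) →
      (∀ a b, P a → P b → P (a + b)) → (∀ a b, P a → P b → P (a * b)) → ∀ s : S, P s := by
    intro P hi hj' hadd hmul s
    let T : Subalgebra ℝ S :=
      { carrier := {x | P x}
        mul_mem' := fun ha hb => hmul _ _ ha hb
        add_mem' := fun ha hb => hadd _ _ ha hb
        one_mem' := by show P (1:S); rw [← map_one i]; exact hi 1
        zero_mem' := by show P (0:S); rw [← map_zero i]; exact hi 0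
        algebraMap_mem' := fun r => by
          show P (algebraMap ℝ S r); rw [← i.commutes r]; exact hi _ }
    have hle : Algebra.adjoin ℝ (Set.range i ∪ Set.range j) ≤ T := by
      apply Algebra.adjoin_le
      rintro x (⟨f, rfl⟩ | ⟨μ, rfl⟩)
      exacts [hi f, hj' μ]
    rw [hgen] at hle
    exact hle (by trivial : s ∈ (⊤ : Subalgebra ℝ S))
  -- basic properties of Λ
  have hΛ₀_zerol : ∀ C : S, Λ₀ 0 C = 0 := by
    intro C
    have h := hΛ₀_addl 0 0 C
    rw [add_zero] at h
    exact add_eq_right.mp h.symm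
  have hΛ_addl : ∀ A B C : S, Λ (A + B) C = Λ A C + Λ B C := by
    intro A B C
    rw [hΛ, hΛ, hΛ, hΛ₀_addl, map_add, map_add]
    ring
  have hΛ_addr : ∀ A B C : S, Λ A (B + C) = Λ A B + Λ A C := by
    intro A B C
    rw [hΛ, hΛ, hΛ, hΛ₀_addr, map_add, map_add]
    ring
  have hΛ_zerol : ∀ C : S, Λ 0 C = 0 := by
    intro C
    rw [hΛ, hΛ₀_zerol, map_zero Δ, map_zero φv]
    ring
  have hΛ_skew : ∀ A B : S, Λ A B = - Λ B A := by
    intro A B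
    rw [hΛ, hΛ, hΛ₀_skew]
    ring
  have hΛ_zeror : ∀ C : S, Λ C 0 = 0 := by
    intro C; rw [hΛ_skew, hΛ_zerol, neg_zero]
  have hΛ_negl : ∀ A C : S, Λ (-A) C = - Λ A C := by
    intro A C
    have h := hΛ_addl A (-A) C
    rw [add_neg_cancel, hΛ_zerol] at h
    linear_combination -h
  have hΛ_subl : ∀ A B C : S, Λ (A - B) C = Λ A C - Λ B C := by
    intro A B C
    rw [sub_eq_add_neg, hΛ_addl, hΛ_negl, sub_eq_add_neg]
  have hΛ_negr : ∀ A C : S, Λ C (-A) = - Λ C A := by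
    intro A C
    rw [hΛ_skew, hΛ_negl, hΛ_skew A C]
    ring
  have hΛ_leibr : ∀ A B C : S, Λ A (B * C) = B * Λ A C + C * Λ A B := by
    intro A B C
    rw [hΛ, hΛ, hΛ, hΛ₀_leib, Derivation.leibniz, Derivation.leibniz,
      smul_eq_mul, smul_eq_mul, smul_eq_mul, smul_eq_mul]
    ring
  have hΛ_leibl : ∀ A B C : S, Λ (A * B) C = A * Λ B C + B * Λ A C := by
    intro A B C
    rw [hΛ_skew (A * B) C, hΛ_leibr C A B, hΛ_skew C B, hΛ_skew C A]
    ring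
  -- values of Λ and E on generators
  have hΛjj : ∀ μ η : L, Λ (j μ) (j η) = j (br μ η) + (j μ * i (φ η) - j η * i (φ μ)) := by
    intro μ η
    rw [hΛ, hΛ₀jj, hΔj, hΔj, hφvj, hφvj]
  have hΛji : ∀ (μ : L) (f : R), Λ (j μ) (i f) = i (ρ μ f) := by
    intro μ f
    rw [hΛ, hΛ₀jf, hΔj, hΔi, hφvi]
    ring
  have hΛij : ∀ (f : R) (μ : L), Λ (i f) (j μ) = - i (ρ μ f) := by
    intro f μ
    rw [hΛ_skew, hΛji]
  have hΛii : ∀ f g : R, Λ (i f) (i g) = 0 := by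
    intro f g
    rw [hΛ, hΛ₀ff, hΔi, hΔi]
    ring
  have hEi : ∀ f : R, E (i f) = 0 := by
    intro f; rw [hE, hφvi, neg_zero]
  have hEj : ∀ μ : L, E (j μ) = - i (φ μ) := by
    intro μ; rw [hE, hφvj]
  have hE_add : ∀ A B : S, E (A + B) = E A + E B := by
    intro A B; rw [hE, hE, hE, map_add]; ring
  have hE_neg : ∀ A : S, E (-A) = - E A := by
    intro A; rw [hE, hE, map_neg]
  have hE_mul : ∀ A B : S, E (A * B) = A * E B + B * E A := by
    intro A B
    rw [hE, hE, hE, Derivation.leibniz, smul_eq_mul, smul_eq_mul]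
    ring
  -- skew symmetry of the algebroid bracket, mapped versions
  have hbr_skew : ∀ x y : L, br x y = - br y x := by
    intro x y
    have h := hbr_alt (x + y)
    rw [hbr_addl, hbr_addr, hbr_addr, hbr_alt, hbr_alt, zero_add, add_zero] at h
    exact eq_neg_of_add_eq_zero_left h
  have hskw' : ∀ α β : L, j (br α β) = - j (br β α) := by
    intro α β; rw [hbr_skew α β, map_neg]
  have hcoc' : ∀ α β : L, i (φ (br α β)) = i (ρ α (φ β)) - i (ρ β (φ α)) := by
    intro α β; rw [hcoc, map_sub]
  have hjac' : ∀ μ η ζ : L, j (br (br μ η) ζ) + j (br (br η ζ) μ) + j (br (br ζ μ) η) = 0 := by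
    intro μ η ζ
    have h := congrArg j (hbr_jac μ η ζ)
    rw [map_add, map_add, map_zero] at h
    rw [hbr_skew (br μ η) ζ, hbr_skew (br η ζ) μ, hbr_skew (br ζ μ) η,
      map_neg, map_neg, map_neg]
    linear_combination -h
  -- the Jacobi-type expression
  let JE : S → S → S → S := fun F G H =>
    Λ (Λ F G) H + Λ (Λ G H) F + Λ (Λ H F) G -
      (E F * Λ G H + E G * Λ H F + E H * Λ F G)
  have hJE : ∀ F G H : S, JE F G H =
      Λ (Λ F G) H + Λ (Λ G H) F + Λ (Λ H F) G -
        (E F * Λ G H + E G * Λ H F + E H * Λ F G) := fun _ _ _ => rfl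
  have hJ_cyc : ∀ F G H : S, JE F G H = JE G H F := by
    intro F G H; rw [hJE, hJE]; ring
  have hJ_addr : ∀ F G H₁ H₂ : S, JE F G (H₁ + H₂) = JE F G H₁ + JE F G H₂ := by
    intro F G H₁ H₂
    rw [hJE, hJE, hJE, hΛ_addr (Λ F G) H₁ H₂, hΛ_addr G H₁ H₂,
      hΛ_addl (Λ G H₁) (Λ G H₂) F, hΛ_addl H₁ H₂ F,
      hΛ_addl (Λ H₁ F) (Λ H₂ F) G, hE_add H₁ H₂]
    ring
  have hJ_mulr : ∀ F G H₁ H₂ : S, JE F G (H₁ * H₂) = H₁ * JE F G H₂ + H₂ * JE F G H₁ := by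
    intro F G H₁ H₂
    rw [hJE, hJE, hJE, hΛ_leibr (Λ F G) H₁ H₂, hΛ_leibr G H₁ H₂,
      hΛ_addl (H₁ * Λ G H₂) (H₂ * Λ G H₁) F,
      hΛ_leibl H₁ (Λ G H₂) F, hΛ_leibl H₂ (Λ G H₁) F,
      hΛ_leibl H₁ H₂ F,
      hΛ_addl (H₁ * Λ H₂ F) (H₂ * Λ H₁ F) G,
      hΛ_leibl H₁ (Λ H₂ F) G, hΛ_leibl H₂ (Λ H₁ F) G,
      hE_mul H₁ H₂]
    linear_combination (Λ H₂ F) * hΛ_skew H₁ G + (Λ H₁ F) * hΛ_skew H₂ G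
  -- generator cases
  have hJiii : ∀ f g h : R, JE (i f) (i g) (i h) = 0 := by
    intro f g h
    rw [hJE]
    simp only [hΛii, hΛ_zerol, hEi]
    ring
  have hJjii : ∀ (μ : L) (f g : R), JE (j μ) (i f) (i g) = 0 := by
    intro μ f g
    rw [hJE]
    simp only [hΛji, hΛii, hΛij, hΛ_negl, hΛ_zerol, hEi, hEj]
    ring
  have hJjji : ∀ (μ η : L) (f : R), JE (j μ) (j η) (i f) = 0 := by
    intro μ η f
    have h8 : i (ρ (br μ η) f) = i (ρ μ (ρ η f)) - i (ρ η (ρ μ f)) := by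
      rw [hρ_hom, map_sub]
    rw [hJE]
    simp only [hΛjj, hΛji, hΛij, hΛii, hΛ_addl, hΛ_subl, hΛ_leibl, hΛ_negl,
      hΛ_zerol, hEi, hEj]
    linear_combination h8
  have hJjjj : ∀ μ η ζ : L, JE (j μ) (j η) (j ζ) = 0 := by
    intro μ η ζ
    rw [hJE]
    simp only [hΛjj, hΛji, hΛij, hΛii, hΛ_addl, hΛ_subl, hΛ_leibl, hΛ_negl,
      hΛ_zerol, hEi, hEj]
    linear_combination hjac' μ η ζ - j ζ * hcoc' μ η - j μ * hcoc' η ζ - j η * hcoc' ζ μ +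
      i (φ η) * hskw' μ ζ + i (φ ζ) * hskw' η μ + i (φ μ) * hskw' ζ η
  -- generator predicate
  let Gen : S → Prop := fun s => (∃ f, s = i f) ∨ (∃ μ, s = j μ)
  have hGi : ∀ f : R, Gen (i f) := fun f => Or.inl ⟨f, rfl⟩
  have hGj : ∀ μ : L, Gen (j μ) := fun μ => Or.inr ⟨μ, rfl⟩
  have base : ∀ x y z : S, Gen x → Gen y → Gen z → JE x y z = 0 := by
    rintro x y z (⟨f, rfl⟩ | ⟨μ, rfl⟩) (⟨g, rfl⟩ | ⟨η, rfl⟩) (⟨h, rfl⟩ | ⟨ζ, rfl⟩)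
    · exact hJiii f g h
    · rw [hJ_cyc, hJ_cyc]; exact hJjii ζ f g
    · rw [hJ_cyc]; exact hJjii η h f
    · rw [hJ_cyc]; exact hJjji η ζ f
    · exact hJjii μ g h
    · rw [hJ_cyc, hJ_cyc]; exact hJjji ζ μ g
    · exact hJjji μ η h
    · exact hJjjj μ η ζ
  have lvl1 : ∀ x y : S, Gen x → Gen y → ∀ H, JE x y H = 0 := by
    intro x y hx hy
    refine hind (fun H => JE x y H = 0) ?_ ?_ ?_ ?_
    · intro f; exact base x y (i f) hx hy (hGi f)
    · intro μ; exact base x y (j μ) hx hy (hGj μ)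
    · intro a b ha hb; rw [hJ_addr, ha, hb, add_zero]
    · intro a b ha hb; rw [hJ_mulr, ha, hb]; ring
  have lvl2 : ∀ x : S, Gen x → ∀ G H, JE x G H = 0 := by
    intro x hx
    refine hind (fun G => ∀ H, JE x G H = 0) ?_ ?_ ?_ ?_
    · intro f H; exact lvl1 x (i f) hx (hGi f) H
    · intro μ H; exact lvl1 x (j μ) hx (hGj μ) H
    · intro a b ha hb H
      rw [hJ_cyc x (a + b) H, hJ_cyc (a + b) H x, hJ_addr H x a b,
        hJ_cyc H x a, hJ_cyc H x b, ha H, hb H, add_zero]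
    · intro a b ha hb H
      rw [hJ_cyc x (a * b) H, hJ_cyc (a * b) H x, hJ_mulr H x a b,
        hJ_cyc H x a, hJ_cyc H x b, ha H, hb H]
      ring
  have lvl3 : ∀ F G H : S, JE F G H = 0 := by
    intro F
    refine hind (fun F => ∀ G H, JE F G H = 0) ?_ ?_ ?_ ?_ F
    · intro f G H; exact lvl2 (i f) (hGi f) G H
    · intro μ G H; exact lvl2 (j μ) (hGj μ) G H
    · intro a b ha hb G H
      rw [hJ_cyc (a + b) G H, hJ_addr G H a b,
        ← hJ_cyc a G H, ← hJ_cyc b G H, ha G H, hb G H, add_zero]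
    · intro a b ha hb G H
      rw [hJ_cyc (a * b) G H, hJ_mulr G H a b,
        ← hJ_cyc a G H, ← hJ_cyc b G H, ha G H, hb G H]
      ring
  -- second structure equation
  have hE0 : E (0 : S) = 0 := by rw [hE, map_zero, neg_zero]
  have hE_sub : ∀ A B : S, E (A - B) = E A - E B := by
    intro A B; rw [sub_eq_add_neg, hE_add, hE_neg, sub_eq_add_neg]
  let KE : S → S → S := fun F G => E (Λ F G) - Λ (E F) G - Λ F (E G)
  have hKE : ∀ F G : S, KE F G = E (Λ F G) - Λ (E F) G - Λ F (E G) := fun _ _ => rfl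
  have hK_addr : ∀ F G₁ G₂ : S, KE F (G₁ + G₂) = KE F G₁ + KE F G₂ := by
    intro F G₁ G₂
    rw [hKE, hKE, hKE, hΛ_addr F G₁ G₂, hE_add (Λ F G₁) (Λ F G₂),
      hE_add G₁ G₂, hΛ_addr F (E G₁) (E G₂), hΛ_addr (E F) G₁ G₂]
    ring
  have hK_mulr : ∀ F G₁ G₂ : S, KE F (G₁ * G₂) = G₁ * KE F G₂ + G₂ * KE F G₁ := by
    intro F G₁ G₂
    rw [hKE, hKE, hKE, hΛ_leibr F G₁ G₂, hE_add (G₁ * Λ F G₂) (G₂ * Λ F G₁),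
      hE_mul G₁ (Λ F G₂), hE_mul G₂ (Λ F G₁), hE_mul G₁ G₂,
      hΛ_addr F (G₁ * E G₂) (G₂ * E G₁), hΛ_leibr F G₁ (E G₂), hΛ_leibr F G₂ (E G₁),
      hΛ_leibr (E F) G₁ G₂]
    ring
  have hK_addl : ∀ F₁ F₂ G : S, KE (F₁ + F₂) G = KE F₁ G + KE F₂ G := by
    intro F₁ F₂ G
    rw [hKE, hKE, hKE, hΛ_addl F₁ F₂ G, hE_add (Λ F₁ G) (Λ F₂ G),
      hE_add F₁ F₂, hΛ_addl (E F₁) (E F₂) G, hΛ_addl F₁ F₂ (E G)]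
    ring
  have hK_mull : ∀ F₁ F₂ G : S, KE (F₁ * F₂) G = F₁ * KE F₂ G + F₂ * KE F₁ G := by
    intro F₁ F₂ G
    rw [hKE, hKE, hKE, hΛ_leibl F₁ F₂ G, hE_add (F₁ * Λ F₂ G) (F₂ * Λ F₁ G),
      hE_mul F₁ (Λ F₂ G), hE_mul F₂ (Λ F₁ G), hE_mul F₁ F₂,
      hΛ_addl (F₁ * E F₂) (F₂ * E F₁) G, hΛ_leibl F₁ (E F₂) G, hΛ_leibl F₂ (E F₁) G,
      hΛ_leibl F₁ F₂ (E G)]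
    ring
  have hKbase : ∀ x y : S, Gen x → Gen y → KE x y = 0 := by
    rintro x y (⟨f, rfl⟩ | ⟨μ, rfl⟩) (⟨g, rfl⟩ | ⟨η, rfl⟩)
    · rw [hKE]
      simp only [hΛii, hEi, hE0, hΛ_zerol, hΛ_zeror]
      ring
    · rw [hKE]
      simp only [hΛij, hE_neg, hEi, hEj, hΛ_zerol, hΛ_negr, hΛii]
      ring
    · rw [hKE]
      simp only [hΛji, hEi, hEj, hΛ_negl, hΛii, hΛ_zeror]
      ring
    · rw [hKE]
      simp only [hΛjj, hE_add, hE_sub, hE_mul, hEj, hEi, hΛ_negl, hΛ_negr, hΛij, hΛji]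
      linear_combination -hcoc' μ η
  have hK1 : ∀ x : S, Gen x → ∀ G, KE x G = 0 := by
    intro x hx
    refine hind (fun G => KE x G = 0) ?_ ?_ ?_ ?_
    · intro f; exact hKbase x (i f) hx (hGi f)
    · intro μ; exact hKbase x (j μ) hx (hGj μ)
    · intro a b ha hb; rw [hK_addr, ha, hb, add_zero]
    · intro a b ha hb; rw [hK_mulr, ha, hb]; ring
  have hK2 : ∀ F G : S, KE F G = 0 := by
    intro F
    refine hind (fun F => ∀ G, KE F G = 0) ?_ ?_ ?_ ?_ F
    · intro f G; exact hK1 (i f) (hGi f) G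
    · intro μ G; exact hK1 (j μ) (hGj μ) G
    · intro a b ha hb G; rw [hK_addl, ha G, hb G, add_zero]
    · intro a b ha hb G; rw [hK_mull, ha G, hb G]; ring
  constructor
  · intro F G H
    have h := lvl3 F G H
    rw [hJE] at h
    linear_combination 2 * h
  · intro F G
    have h := hK2 F G
    rw [hKE] at h
    exact h
end

section
/- In the setting of a Lie algebroid (A, [[,]], ρ) with 1-cocycle φ ∈ Γ(A*), the Jacobi bracket {,} of the Jacobi structure (Λ_{A*} + Δ∧φ^v, -φ^v) on A* satisfies: {μ~, η~} = ([[μ,η]])~, {μ~, f∘π*} = (ρ(μ)(f) + φ(μ)f)∘π*, and {f∘π*, g∘π*} = 0, for all sections μ,η of A and all f,g ∈ C^∞(M). -/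
/-- **Theorem 1 of the paper, bracket values.**  In the setting of a Lie
algebroid `(A, [[,]], ρ)` with 1-cocycle `φ ∈ Γ(A*)`, the Jacobi bracket
`{F,G} = Λ(dF,dG) + F E(G) - G E(F)` of the Jacobi structure
`(Λ_{A*} + Δ∧φ^v, -φ^v)` on `A*` satisfies `{μ~, η~} = ([[μ,η]])~`,
`{μ~, f∘π*} = (ρ(μ)(f) + φ(μ) f)∘π*` and `{f∘π*, g∘π*} = 0` for all sections
`μ, η ∈ Γ(A)` and all `f, g ∈ C^∞(M)`.  Here `i f` is the basic function `f∘π*` and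
`j μ` the linear function `μ~` on `A*`. -/
theorem induced_jacobi_bracket_values
    {R : Type*} [CommRing R] [Algebra ℝ R]
    {L : Type*} [AddCommGroup L] [Module R L]
    {S : Type*} [CommRing S] [Algebra ℝ S]
    (br : L → L → L) (ρ : L → R → R)
    (hbr_addl : ∀ μ₁ μ₂ η : L, br (μ₁ + μ₂) η = br μ₁ η + br μ₂ η)
    (hbr_addr : ∀ μ η₁ η₂ : L, br μ (η₁ + η₂) = br μ η₁ + br μ η₂)
    (hbr_alt : ∀ μ : L, br μ μ = 0)
    (hbr_jac : ∀ μ η ζ : L, br μ (br η ζ) + br η (br ζ μ) + br ζ (br μ η) = 0)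
    (hρ_add : ∀ (μ₁ μ₂ : L) (f : R), ρ (μ₁ + μ₂) f = ρ μ₁ f + ρ μ₂ f)
    (hρ_lin : ∀ (f : R) (μ : L) (g : R), ρ (f • μ) g = f * ρ μ g)
    (hρ_der_add : ∀ (μ : L) (f g : R), ρ μ (f + g) = ρ μ f + ρ μ g)
    (hρ_der_mul : ∀ (μ : L) (f g : R), ρ μ (f * g) = f * ρ μ g + g * ρ μ f)
    (hρ_hom : ∀ (μ η : L) (f : R), ρ (br μ η) f = ρ μ (ρ η f) - ρ η (ρ μ f))
    (hleib : ∀ (μ : L) (f : R) (η : L), br μ (f • η) = f • br μ η + ρ μ f • η)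
    (φ : L → R)
    (hφ_add : ∀ μ η : L, φ (μ + η) = φ μ + φ η)
    (hφ_lin : ∀ (f : R) (μ : L), φ (f • μ) = f * φ μ)
    (hcoc : ∀ μ η : L, φ (br μ η) = ρ μ (φ η) - ρ η (φ μ))
    (i : R →ₐ[ℝ] S) (j : L →+ S)
    (hj : ∀ (f : R) (μ : L), j (f • μ) = i f * j μ)
    (hgen : Algebra.adjoin ℝ (Set.range i ∪ Set.range j) = ⊤)
    -- the linear Poisson bivector `Λ_{A*}` of the Lie algebroid, as a skew biderivation
    (Λ₀ : S → S → S)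
    (hΛ₀_addl : ∀ F G H : S, Λ₀ (F + G) H = Λ₀ F H + Λ₀ G H)
    (hΛ₀_addr : ∀ F G H : S, Λ₀ F (G + H) = Λ₀ F G + Λ₀ F H)
    (hΛ₀_skew : ∀ F G : S, Λ₀ F G = - Λ₀ G F)
    (hΛ₀_leib : ∀ F G H : S, Λ₀ F (G * H) = G * Λ₀ F H + H * Λ₀ F G)
    (hΛ₀jj : ∀ μ η : L, Λ₀ (j μ) (j η) = j (br μ η))
    (hΛ₀jf : ∀ (μ : L) (f : R), Λ₀ (j μ) (i f) = i (ρ μ f))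
    (hΛ₀ff : ∀ f g : R, Λ₀ (i f) (i g) = 0)
    -- the Liouville vector field `Δ` and the vertical lift `φ^v`
    (Δ φv : Derivation ℝ S S)
    (hΔi : ∀ f : R, Δ (i f) = 0) (hΔj : ∀ μ : L, Δ (j μ) = j μ)
    (hφvi : ∀ f : R, φv (i f) = 0) (hφvj : ∀ μ : L, φv (j μ) = i (φ μ))
    (Λ : S → S → S) (E : S → S)
    (hΛ : ∀ F G : S, Λ F G = Λ₀ F G + (Δ F * φv G - Δ G * φv F))
    (hE : ∀ F : S, E F = - φv F)
    (jb : S → S → S)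
    (hjb : ∀ F G : S, jb F G = Λ F G + F * E G - G * E F) :
    (∀ μ η : L, jb (j μ) (j η) = j (br μ η)) ∧
    (∀ (μ : L) (f : R), jb (j μ) (i f) = i (ρ μ f + φ μ * f)) ∧
    (∀ f g : R, jb (i f) (i g) = 0) := by
  refine ⟨?_, ?_, ?_⟩
  · intro μ η
    simp [hjb, hΛ, hΛ₀jj, hΔj, hφvj, hE]
    ring
  · intro μ f
    simp [hjb, hΛ, hΛ₀jf, hΔi, hΔj, hφvi, hφvj, hE, map_add, map_mul]
    ring
  · intro f g
    simp [hjb, hΛ, hΛ₀ff, hΔi, hφvi, hE]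
end

section
/- Let (Λ, E) be a Jacobi structure on A* satisfying (C1): the Jacobi bracket of two linear functions is linear, and (C2): the Jacobi bracket of a linear function and the constant 1 is basic. Then the Jacobi bracket of a linear function and a basic function is basic, and the Jacobi bracket of two basic functions is zero. -/
/-- Let `(Λ, E)` be a Jacobi structure on the dual `A*` of a vector
bundle `π : A → M` (algebraically: `S` is the algebra of functions on `A*`, generated by
the basic functions `i f = f∘π*` and the linear functions `j μ = μ~`), satisfying
(C1): the Jacobi bracket of two linear functions is linear, and (C2): the Jacobi
bracket of a linear function and the constant `1` is basic.  Then the Jacobi bracket of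
a linear function and a basic function is basic, and the Jacobi bracket of two basic
functions is zero. -/
theorem bracket_linear_basic_is_basic_and_basic_basic_zero
    {R : Type*} [CommRing R] [Algebra ℝ R]
    {L : Type*} [AddCommGroup L] [Module R L]
    {S : Type*} [CommRing S] [Algebra ℝ S]
    (i : R →ₐ[ℝ] S) (j : L →+ S)
    (hj : ∀ (f : R) (μ : L), j (f • μ) = i f * j μ)
    (hgen : Algebra.adjoin ℝ (Set.range i ∪ Set.range j) = ⊤)
    -- only the zero function is sent into the basic functions by multiplication
    -- with every linear function
    (hfree : ∀ s : S, (∀ μ : L, j μ * s ∈ Set.range i) → s = 0)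
    -- a function whose product with every linear function is linear is basic
    (hlin : ∀ s : S, (∀ η : L, j η * s ∈ Set.range j) → s ∈ Set.range i)
    -- a Jacobi structure `(Λ, E)` on `A*`: a skew biderivation and a derivation
    -- satisfying `[Λ,Λ]_SN = 2E∧Λ` and `[E,Λ]_SN = 0` (evaluated on functions)
    (Λ : S → S → S) (E : Derivation ℝ S S)
    (hΛ_addl : ∀ F G H : S, Λ (F + G) H = Λ F H + Λ G H)
    (hΛ_addr : ∀ F G H : S, Λ F (G + H) = Λ F G + Λ F H)
    (hΛ_skew : ∀ F G : S, Λ F G = - Λ G F)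
    (hΛ_leib : ∀ F G H : S, Λ F (G * H) = G * Λ F H + H * Λ F G)
    (hSN1 : ∀ F G H : S,
      2 * (Λ (Λ F G) H + Λ (Λ G H) F + Λ (Λ H F) G)
        = 2 * (E F * Λ G H + E G * Λ H F + E H * Λ F G))
    (hSN2 : ∀ F G : S, E (Λ F G) - Λ (E F) G - Λ F (E G) = 0)
    (jb : S → S → S)
    (hjb : ∀ F G : S, jb F G = Λ F G + F * E G - G * E F)
    -- condition (C1)
    (hC1 : ∀ μ η : L, jb (j μ) (j η) ∈ Set.range j)
    -- condition (C2)
    (hC2 : ∀ μ : L, jb (j μ) 1 ∈ Set.range i) :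
    (∀ (μ : L) (f : R), jb (j μ) (i f) ∈ Set.range i) ∧
    (∀ f g : R, jb (i f) (i g) = 0) := by

  -- `Λ F 1 = 0`
  have hΛ1 : ∀ F : S, Λ F 1 = 0 := by
    intro F
    have h := hΛ_leib F 1 1
    rw [mul_one] at h
    linear_combination -h
  -- `E` of a linear function is basic
  have hEj : ∀ μ : L, ∃ g : R, E (j μ) = i g := by
    intro μ
    obtain ⟨g, hg⟩ := hC2 μ
    refine ⟨-g, ?_⟩
    have h := hjb (j μ) 1
    rw [hΛ1, E.map_one_eq_zero, mul_zero, one_mul] at h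
    have hneg : i (-g) = - i g := map_neg i g
    rw [hneg]
    linear_combination h + hg
  -- `E` of a basic function is zero
  have hEi : ∀ f : R, E (i f) = 0 := by
    intro f
    apply hfree
    intro μ
    obtain ⟨g, hg⟩ := hEj μ
    obtain ⟨g', hg'⟩ := hEj (f • μ)
    have hL := E.leibniz (i f) (j μ)
    rw [smul_eq_mul, smul_eq_mul] at hL
    have hE : E (i f * j μ) = i g' := by rw [← hj, hg']
    exact ⟨g' - f * g, by rw [map_sub, map_mul]; linear_combination -hE + hL + i f * hg⟩
  -- Goal 1
  have goal1 : ∀ (μ : L) (f : R), jb (j μ) (i f) ∈ Set.range i := by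
    intro μ f
    apply hlin
    intro η
    obtain ⟨ν, hν⟩ := hC1 μ (f • η)
    obtain ⟨ν₂, hν₂⟩ := hC1 μ η
    obtain ⟨g, hg⟩ := hEj μ
    rw [hj] at hν
    have h2 := hjb (j μ) (i f * j η)
    have h3 := hΛ_leib (j μ) (i f) (j η)
    have h4 := E.leibniz (i f) (j η)
    rw [smul_eq_mul, smul_eq_mul] at h4
    have h6 := hjb (j μ) (j η)
    have h7 := hjb (j μ) (i f)
    refine ⟨ν - f • ν₂ - (f * g) • η, ?_⟩
    rw [map_sub, map_sub, hj, hj, map_mul]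
    linear_combination hν + h2 + h3 + j μ * h4 - i f * hν₂ - i f * h6
      - j η * h7 + i f * j η * hg
  refine ⟨goal1, ?_⟩
  -- `Λ` of a linear and a basic function is basic
  have hΛji : ∀ (μ : L) (f : R), ∃ g : R, Λ (j μ) (i f) = i g := by
    intro μ f
    obtain ⟨h, hh⟩ := goal1 μ f
    obtain ⟨g, hg⟩ := hEj μ
    refine ⟨h + f * g, ?_⟩
    have h7 := hjb (j μ) (i f)
    rw [hEi, mul_zero] at h7
    rw [map_add, map_mul]
    linear_combination -hh - h7 + i f * hg
  -- Goal 2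
  intro f g
  apply hfree
  intro μ
  obtain ⟨a, ha⟩ := hΛji (f • μ) g
  rw [hj] at ha
  obtain ⟨b, hb⟩ := hΛji μ g
  have hjbΛ : jb (i f) (i g) = Λ (i f) (i g) := by
    rw [hjb, hEi, hEi, mul_zero, mul_zero]; ring
  have hsw : Λ (j (f • μ)) (i g) = - Λ (i g) (j (f • μ)) := hΛ_skew _ _
  rw [hj] at hsw
  have hle := hΛ_leib (i g) (i f) (j μ)
  have hs1 := hΛ_skew (i g) (j μ)
  have hs2 := hΛ_skew (i g) (i f)
  refine ⟨a - f * b, ?_⟩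
  rw [map_sub, map_mul, hjbΛ]
  linear_combination -ha + hsw - hle - i f * hs1 - j μ * hs2 + i f * hb
end

section
/- On ℝ² with coordinates (x,y), the pair Λ = xy ∂/∂x ∧ ∂/∂y, E = x ∂/∂x is a Jacobi structure (i.e. [Λ,Λ]_{SN} = 2E∧Λ and [E,Λ]_{SN} = 0), viewing ℝ² as the dual of a rank-2 vector bundle over a point; its Jacobi bracket sends pairs of linear functions to linear functions (condition C1) but {x, 1} = -E(x) = -x is not constant, so condition (C2) fails. -/
open scoped Topology

/-- Partial derivative in the `x`-direction on `ℝ²`. -/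
noncomputable def pdx (f : ℝ × ℝ → ℝ) (p : ℝ × ℝ) : ℝ := fderiv ℝ f p (1, 0)

/-- Partial derivative in the `y`-direction on `ℝ²`. -/
noncomputable def pdy (f : ℝ × ℝ → ℝ) (p : ℝ × ℝ) : ℝ := fderiv ℝ f p (0, 1)

/-- The bivector `Λ = xy ∂/∂x ∧ ∂/∂y` on `ℝ²`, evaluated on two functions. -/
noncomputable def Λxy (f g : ℝ × ℝ → ℝ) (p : ℝ × ℝ) : ℝ :=
  p.1 * p.2 * (pdx f p * pdy g p - pdy f p * pdx g p)

/-- The vector field `E = x ∂/∂x` on `ℝ²`, applied to a function. -/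
noncomputable def Exx (f : ℝ × ℝ → ℝ) (p : ℝ × ℝ) : ℝ := p.1 * pdx f p

/-- The Jacobi bracket `{f,g} = Λ(df,dg) + f E(g) - g E(f)` of `(Λxy, Exx)`. -/
noncomputable def jbxy (f g : ℝ × ℝ → ℝ) (p : ℝ × ℝ) : ℝ :=
  Λxy f g p + f p * Exx g p - g p * Exx f p

/-- Second derivative helper. -/
noncomputable def D2 (f : ℝ × ℝ → ℝ) (p v w : ℝ × ℝ) : ℝ :=
  fderiv ℝ (fderiv ℝ f) p v w

lemma hasFDerivAt_pdv (f : ℝ × ℝ → ℝ) (hf : ContDiff ℝ (⊤ : ℕ∞) f) (p v₀ : ℝ × ℝ) :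
    HasFDerivAt (fun q => fderiv ℝ f q v₀)
      ((ContinuousLinearMap.apply ℝ ℝ v₀).comp (fderiv ℝ (fderiv ℝ f) p)) p := by
  have h1 : HasFDerivAt (fderiv ℝ f) (fderiv ℝ (fderiv ℝ f) p) p :=
    (((hf.fderiv_right (m := 1) (by exact WithTop.coe_le_coe.mpr le_top)).differentiable one_ne_zero) p).hasFDerivAt
  exact (ContinuousLinearMap.apply ℝ ℝ v₀).hasFDerivAt.comp p h1

lemma D2_symm (f : ℝ × ℝ → ℝ) (hf : ContDiff ℝ (⊤ : ℕ∞) f) (p v w : ℝ × ℝ) :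
    D2 f p v w = D2 f p w v :=
  second_derivative_symmetric (fun y => ((hf.differentiable (by simp)) y).hasFDerivAt)
    ((((hf.fderiv_right (m := 1) (by exact WithTop.coe_le_coe.mpr le_top)).differentiable one_ne_zero) p).hasFDerivAt) v w

lemma fderiv_Λ (f g : ℝ × ℝ → ℝ) (hf : ContDiff ℝ (⊤ : ℕ∞) f) (hg : ContDiff ℝ (⊤ : ℕ∞) g)
    (p v : ℝ × ℝ) :
    fderiv ℝ (Λxy f g) p v
      = (v.1 * p.2 + p.1 * v.2) * (pdx f p * pdy g p - pdy f p * pdx g p)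
        + p.1 * p.2 * (D2 f p v (1,0) * pdy g p + pdx f p * D2 g p v (0,1)
            - D2 f p v (0,1) * pdx g p - pdy f p * D2 g p v (1,0)) := by
  have hA : HasFDerivAt (Λxy f g) _ p :=
    (hasFDerivAt_fst.mul hasFDerivAt_snd).mul
      (((hasFDerivAt_pdv f hf p (1,0)).mul (hasFDerivAt_pdv g hg p (0,1))).sub
        ((hasFDerivAt_pdv f hf p (0,1)).mul (hasFDerivAt_pdv g hg p (1,0))))
  rw [hA.fderiv]
  simp only [pdx, pdy, D2, Pi.mul_apply, ContinuousLinearMap.add_apply, ContinuousLinearMap.smul_apply,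
    ContinuousLinearMap.sub_apply, ContinuousLinearMap.comp_apply,
    ContinuousLinearMap.apply_apply, ContinuousLinearMap.coe_fst', ContinuousLinearMap.coe_snd',
    smul_eq_mul]
  ring

lemma pdx_Λ (f g : ℝ × ℝ → ℝ) (hf : ContDiff ℝ (⊤ : ℕ∞) f) (hg : ContDiff ℝ (⊤ : ℕ∞) g) (p : ℝ × ℝ) :
    pdx (Λxy f g) p
      = p.2 * (pdx f p * pdy g p - pdy f p * pdx g p)
        + p.1 * p.2 * (D2 f p (1,0) (1,0) * pdy g p + pdx f p * D2 g p (1,0) (0,1)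
            - D2 f p (1,0) (0,1) * pdx g p - pdy f p * D2 g p (1,0) (1,0)) := by
  simpa [pdx] using fderiv_Λ f g hf hg p (1,0)

lemma pdy_Λ (f g : ℝ × ℝ → ℝ) (hf : ContDiff ℝ (⊤ : ℕ∞) f) (hg : ContDiff ℝ (⊤ : ℕ∞) g) (p : ℝ × ℝ) :
    pdy (Λxy f g) p
      = p.1 * (pdx f p * pdy g p - pdy f p * pdx g p)
        + p.1 * p.2 * (D2 f p (0,1) (1,0) * pdy g p + pdx f p * D2 g p (0,1) (0,1)
            - D2 f p (0,1) (0,1) * pdx g p - pdy f p * D2 g p (0,1) (1,0)) := by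
  simpa [pdy] using fderiv_Λ f g hf hg p (0,1)

lemma fderiv_Exx (f : ℝ × ℝ → ℝ) (hf : ContDiff ℝ (⊤ : ℕ∞) f) (p v : ℝ × ℝ) :
    fderiv ℝ (Exx f) p v = v.1 * pdx f p + p.1 * D2 f p v (1,0) := by
  have hA : HasFDerivAt (Exx f) _ p := hasFDerivAt_fst.mul (hasFDerivAt_pdv f hf p (1,0))
  rw [hA.fderiv]
  simp only [pdx, D2, ContinuousLinearMap.add_apply, ContinuousLinearMap.smul_apply,
    ContinuousLinearMap.comp_apply, ContinuousLinearMap.apply_apply,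
    ContinuousLinearMap.coe_fst', smul_eq_mul]
  ring

lemma pdx_Exx (f : ℝ × ℝ → ℝ) (hf : ContDiff ℝ (⊤ : ℕ∞) f) (p : ℝ × ℝ) :
    pdx (Exx f) p = pdx f p + p.1 * D2 f p (1,0) (1,0) := by
  simpa [pdx] using fderiv_Exx f hf p (1,0)

lemma pdy_Exx (f : ℝ × ℝ → ℝ) (hf : ContDiff ℝ (⊤ : ℕ∞) f) (p : ℝ × ℝ) :
    pdy (Exx f) p = p.1 * D2 f p (0,1) (1,0) := by
  simpa [pdy] using fderiv_Exx f hf p (0,1)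

lemma pdx_lin (ℓ : ℝ × ℝ →ₗ[ℝ] ℝ) (p : ℝ × ℝ) :
    pdx (fun q => ℓ q) p = ℓ (1,0) := by
  have : fderiv ℝ (fun q => ℓ q) p = LinearMap.toContinuousLinearMap ℓ :=
    (LinearMap.toContinuousLinearMap ℓ).fderiv
  simp [pdx, this]

lemma pdy_lin (ℓ : ℝ × ℝ →ₗ[ℝ] ℝ) (p : ℝ × ℝ) :
    pdy (fun q => ℓ q) p = ℓ (0,1) := by
  have : fderiv ℝ (fun q => ℓ q) p = LinearMap.toContinuousLinearMap ℓ :=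
    (LinearMap.toContinuousLinearMap ℓ).fderiv
  simp [pdy, this]

lemma pdx_fst (p : ℝ × ℝ) : pdx (fun q : ℝ × ℝ => q.1) p = 1 := by
  simp [pdx, hasFDerivAt_fst.fderiv]

lemma pdy_fst (p : ℝ × ℝ) : pdy (fun q : ℝ × ℝ => q.1) p = 0 := by
  simp [pdy, hasFDerivAt_fst.fderiv]

lemma pdx_const (c : ℝ) (p : ℝ × ℝ) : pdx (fun _ : ℝ × ℝ => c) p = 0 := by
  simp [pdx]

lemma pdy_const (c : ℝ) (p : ℝ × ℝ) : pdy (fun _ : ℝ × ℝ => c) p = 0 := by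
  simp [pdy]

lemma lin_expand (ℓ : ℝ × ℝ →ₗ[ℝ] ℝ) (p : ℝ × ℝ) :
    ℓ p = p.1 * ℓ (1,0) + p.2 * ℓ (0,1) := by
  have hp : p = p.1 • ((1:ℝ),(0:ℝ)) + p.2 • ((0:ℝ),(1:ℝ)) := by
    simp [Prod.ext_iff]
  conv_lhs => rw [hp, map_add, map_smul, map_smul]
  simp only [smul_eq_mul]

lemma jb_x_one (p : ℝ × ℝ) : jbxy (fun q => q.1) (fun _ => 1) p = -p.1 := by
  simp [jbxy, Λxy, Exx, pdx_fst, pdy_fst, pdx_const, pdy_const]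

/-- On `ℝ²` with coordinates `(x,y)`, the pair
`Λ = xy ∂/∂x ∧ ∂/∂y`, `E = x ∂/∂x` is a Jacobi structure, i.e. `[Λ,Λ]_SN = 2E∧Λ` and
`[E,Λ]_SN = 0` (evaluated on smooth functions), viewing `ℝ²` as the dual of a rank-2
vector bundle over a point (so linear functions are the linear forms on `ℝ²` and basic
functions are the constants).  Its Jacobi bracket sends pairs of linear functions to
linear functions (condition (C1)), but `{x, 1} = -E(x) = -x`, which is not constant,
so condition (C2) fails. -/
theorem r2_jacobi_C1_holds_C2_fails :
    -- `[Λ,Λ]_SN = 2 E ∧ Λ` on smooth functions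
    (∀ f g h : ℝ × ℝ → ℝ, ContDiff ℝ (⊤ : ℕ∞) f → ContDiff ℝ (⊤ : ℕ∞) g → ContDiff ℝ (⊤ : ℕ∞) h →
      ∀ p : ℝ × ℝ,
        2 * (Λxy (Λxy f g) h p + Λxy (Λxy g h) f p + Λxy (Λxy h f) g p)
          = 2 * (Exx f p * Λxy g h p + Exx g p * Λxy h f p + Exx h p * Λxy f g p)) ∧
    -- `[E,Λ]_SN = 0` on smooth functions
    (∀ f g : ℝ × ℝ → ℝ, ContDiff ℝ (⊤ : ℕ∞) f → ContDiff ℝ (⊤ : ℕ∞) g →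
      ∀ p : ℝ × ℝ,
        Exx (Λxy f g) p - Λxy (fun q => Exx f q) g p - Λxy f (fun q => Exx g q) p = 0) ∧
    -- (C1): the Jacobi bracket of two linear functions is linear
    (∀ ℓ₁ ℓ₂ : ℝ × ℝ →ₗ[ℝ] ℝ, ∃ ℓ₃ : ℝ × ℝ →ₗ[ℝ] ℝ,
      ∀ p : ℝ × ℝ, jbxy (fun q => ℓ₁ q) (fun q => ℓ₂ q) p = ℓ₃ p) ∧
    -- `{x, 1} = -E(x) = -x`
    (∀ p : ℝ × ℝ, jbxy (fun q => q.1) (fun _ => 1) p = -p.1) ∧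
    -- (C2) fails: `{x,1}` is not a basic (= constant) function
    ¬ (∃ c : ℝ, ∀ p : ℝ × ℝ, jbxy (fun q => q.1) (fun _ => 1) p = c) := by
  refine ⟨?_, ?_, ?_, jb_x_one, ?_⟩
  · intro f g h hf hg hh p
    simp only [Λxy, Exx]
    rw [pdx_Λ f g hf hg p, pdy_Λ f g hf hg p, pdx_Λ g h hg hh p, pdy_Λ g h hg hh p,
      pdx_Λ h f hh hf p, pdy_Λ h f hh hf p,
      D2_symm f hf p (0,1) (1,0), D2_symm g hg p (0,1) (1,0), D2_symm h hh p (0,1) (1,0)]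
    ring
  · intro f g hf hg p
    simp only [Λxy]
    rw [pdx_Exx f hf p, pdy_Exx f hf p, pdx_Exx g hg p, pdy_Exx g hg p]
    simp only [Exx]
    rw [pdx_Λ f g hf hg p, D2_symm f hf p (0,1) (1,0), D2_symm g hg p (0,1) (1,0)]
    ring
  · intro ℓ₁ ℓ₂
    refine ⟨0, fun p => ?_⟩
    simp only [jbxy, Λxy, Exx, pdx_lin, pdy_lin, LinearMap.zero_apply]
    rw [lin_expand ℓ₁ p, lin_expand ℓ₂ p]
    ring
  · rintro ⟨c, hc⟩
    have h0 := hc (0,0)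
    have h1 := hc (1,0)
    rw [jb_x_one] at h0 h1
    norm_num at h0 h1
    linarith
end

section
/- Let (M,Λ) be a Poisson manifold and X a vector field with L_X Λ = 0 (a Poisson infinitesimal automorphism). Then Λ_{(TM,X)} = Λ^c + Δ ∧ X^v, E_{(TM,X)} = -X^v is a Jacobi structure on the tangent bundle TM, where Λ^c is the complete lift of Λ to TM, X^v the vertical lift of X, and Δ the Liouville vector field of TM. -/
/-- Auxiliary expression: the Jacobi–compatibility defect. -/
private def jacS {S : Type*} [CommRing S] (Λ : S → S → S) (E : S → S) (F G H : S) : S :=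
  Λ (Λ F G) H + Λ (Λ G H) F + Λ (Λ H F) G - (E F * Λ G H + E G * Λ H F + E H * Λ F G)

/-- Auxiliary expression: the compatibility defect. -/
private def cptS {S : Type*} [CommRing S] (Λ : S → S → S) (E : S → S) (F G : S) : S :=
  E (Λ F G) - Λ (E F) G - Λ F (E G)

/-- **Example 3 of the paper.**  Let `(M, Λ_M)` be a Poisson manifold and
`X` a vector field with `L_X Λ_M = 0` (a Poisson infinitesimal automorphism).  Then
`Λ_{(TM,X)} = Λ^c + Δ ∧ X^v`, `E_{(TM,X)} = -X^v` is a Jacobi structure on the tangent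
bundle `TM`, where `Λ^c` is the complete lift of `Λ_M` to `TM`, `X^v` the vertical lift
of `X`, and `Δ` the Liouville vector field of `TM`.  Algebraically: `R = C^∞(M)`,
`Λ_M` is a Poisson biderivation on `R`, `X : Derivation ℝ R R`; `S` is the algebra of
functions on `TM`, generated by the basic functions `i f` and the fibrewise-linear
functions `ℓ f = (df)~` (`ℓ` is a derivation of `R` into `S`).  The complete lift `Λ^c`
is the linear Poisson structure of the cotangent Lie algebroid of `(M,Λ_M)` on its dual
`TM`, characterized on generators by `Λ^c(ℓf, ℓg) = ℓ{f,g}`, `Λ^c(ℓf, ig) = i{f,g}`,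
`Λ^c(if, ig) = 0`; the vertical lift `X^v` satisfies `X^v(if) = 0`, `X^v(ℓf) = i(Xf)`;
and `Δ(if) = 0`, `Δ(ℓf) = ℓf`.  The Jacobi structure equations are expressed evaluated
on functions. -/
theorem poisson_automorphism_gives_jacobi_on_tangent
    {R : Type*} [CommRing R] [Algebra ℝ R]
    {S : Type*} [CommRing S] [Algebra ℝ S]
    (ΛM : R → R → R)
    (hΛM_addl : ∀ f g h : R, ΛM (f + g) h = ΛM f h + ΛM g h)
    (hΛM_addr : ∀ f g h : R, ΛM f (g + h) = ΛM f g + ΛM f h)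
    (hΛM_skew : ∀ f g : R, ΛM f g = - ΛM g f)
    (hΛM_leib : ∀ f g h : R, ΛM f (g * h) = g * ΛM f h + h * ΛM f g)
    -- `Λ_M` is Poisson: `[Λ_M, Λ_M]_SN = 0` evaluated on functions
    (hΛM_jac : ∀ f g h : R, ΛM (ΛM f g) h + ΛM (ΛM g h) f + ΛM (ΛM h f) g = 0)
    (X : Derivation ℝ R R)
    -- `X` is a Poisson infinitesimal automorphism: `L_X Λ_M = 0`
    (hX : ∀ f g : R, X (ΛM f g) = ΛM (X f) g + ΛM f (X g))
    (i : R →ₐ[ℝ] S) (ℓ : R → S)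
    (hℓ_add : ∀ f g : R, ℓ (f + g) = ℓ f + ℓ g)
    (hℓ_leib : ∀ f g : R, ℓ (f * g) = i f * ℓ g + i g * ℓ f)
    (hgen : Algebra.adjoin ℝ (Set.range i ∪ Set.range ℓ) = ⊤)
    -- the complete lift `Λ^c` of `Λ_M` to `TM`
    (Λc : S → S → S)
    (hΛc_addl : ∀ F G H : S, Λc (F + G) H = Λc F H + Λc G H)
    (hΛc_addr : ∀ F G H : S, Λc F (G + H) = Λc F G + Λc F H)
    (hΛc_skew : ∀ F G : S, Λc F G = - Λc G F)
    (hΛc_leib : ∀ F G H : S, Λc F (G * H) = G * Λc F H + H * Λc F G)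
    (hΛcll : ∀ f g : R, Λc (ℓ f) (ℓ g) = ℓ (ΛM f g))
    (hΛclf : ∀ f g : R, Λc (ℓ f) (i g) = i (ΛM f g))
    (hΛcff : ∀ f g : R, Λc (i f) (i g) = 0)
    -- the Liouville vector field `Δ` of `TM` and the vertical lift `X^v`
    (Δ Xv : Derivation ℝ S S)
    (hΔi : ∀ f : R, Δ (i f) = 0) (hΔl : ∀ f : R, Δ (ℓ f) = ℓ f)
    (hXvi : ∀ f : R, Xv (i f) = 0) (hXvl : ∀ f : R, Xv (ℓ f) = i (X f))
    (Λ : S → S → S) (E : S → S)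
    (hΛ : ∀ F G : S, Λ F G = Λc F G + (Δ F * Xv G - Δ G * Xv F))
    (hE : ∀ F : S, E F = - Xv F) :
    (∀ F G H : S,
      2 * (Λ (Λ F G) H + Λ (Λ G H) F + Λ (Λ H F) G)
        = 2 * (E F * Λ G H + E G * Λ H F + E H * Λ F G)) ∧
    (∀ F G : S, E (Λ F G) - Λ (E F) G - Λ F (E G) = 0) := by
  -- basic facts about ℓ and i
  have hℓ0 : ℓ (0 : R) = 0 := by
    have h := hℓ_add 0 0
    rw [add_zero] at h
    exact (add_eq_left.mp h.symm)
  have hℓ_neg : ∀ f : R, ℓ (-f) = - ℓ f := by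
    intro f
    have h := hℓ_add f (-f)
    rw [add_neg_cancel, hℓ0] at h
    linear_combination -h
  -- basic facts about Λc
  have hΛc0l : ∀ H : S, Λc 0 H = 0 := by
    intro H
    have h := hΛc_addl 0 0 H
    rw [add_zero] at h
    exact (add_eq_left.mp h.symm)
  -- basic facts about Λ
  have hΛ_skew : ∀ F G : S, Λ F G = - Λ G F := by
    intro F G; rw [hΛ, hΛ, hΛc_skew]; ring
  have hΛ0l : ∀ G : S, Λ 0 G = 0 := by
    intro G; rw [hΛ, hΛc0l, map_zero, map_zero]; ring
  have hΛ0r : ∀ F : S, Λ F 0 = 0 := by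
    intro F; rw [hΛ_skew, hΛ0l]; ring
  have hΛaddl : ∀ F G H : S, Λ (F + G) H = Λ F H + Λ G H := by
    intro F G H; rw [hΛ, hΛ, hΛ, hΛc_addl, map_add, map_add]; ring
  have hΛaddr : ∀ F G H : S, Λ F (G + H) = Λ F G + Λ F H := by
    intro F G H; rw [hΛ, hΛ, hΛ, hΛc_addr, map_add, map_add]; ring
  have hΛnegl : ∀ F G : S, Λ (-F) G = - Λ F G := by
    intro F G
    have h := hΛaddl F (-F) G
    rw [add_neg_cancel, hΛ0l] at h
    linear_combination -h
  have hΛnegr : ∀ F G : S, Λ F (-G) = - Λ F G := by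
    intro F G; rw [hΛ_skew, hΛnegl, hΛ_skew G F]; ring
  have hΛmulr : ∀ F G H : S, Λ F (G * H) = G * Λ F H + H * Λ F G := by
    intro F G H
    rw [hΛ, hΛ, hΛ, hΛc_leib, Derivation.leibniz, Derivation.leibniz, smul_eq_mul,
      smul_eq_mul, smul_eq_mul, smul_eq_mul]
    ring
  have hΛmull : ∀ F G H : S, Λ (F * G) H = F * Λ G H + G * Λ F H := by
    intro F G H
    rw [hΛ_skew, hΛmulr, hΛ_skew G H, hΛ_skew F H]; ring
  -- basic facts about E
  have hE0 : E (0 : S) = 0 := by rw [hE, map_zero, neg_zero]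
  have hEadd : ∀ F G : S, E (F + G) = E F + E G := by
    intro F G; rw [hE, hE, hE, map_add]; ring
  have hEneg : ∀ F : S, E (-F) = - E F := by
    intro F; rw [hE, hE, map_neg]
  have hEmul : ∀ F G : S, E (F * G) = F * E G + G * E F := by
    intro F G
    rw [hE, hE, hE, Derivation.leibniz, smul_eq_mul, smul_eq_mul]; ring
  -- values of Λ and E on generators
  have hΛll : ∀ f g : R, Λ (ℓ f) (ℓ g) = ℓ (ΛM f g) + ℓ f * i (X g) - ℓ g * i (X f) := by
    intro f g; rw [hΛ, hΛcll, hΔl, hΔl, hXvl, hXvl]; ring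
  have hΛli : ∀ f g : R, Λ (ℓ f) (i g) = i (ΛM f g) := by
    intro f g; rw [hΛ, hΛclf, hΔi, hXvi, hXvl]; ring
  have hΛil : ∀ f g : R, Λ (i f) (ℓ g) = - i (ΛM g f) := by
    intro f g; rw [hΛ_skew, hΛli]
  have hΛii : ∀ f g : R, Λ (i f) (i g) = 0 := by
    intro f g; rw [hΛ, hΛcff, hΔi, hΔi, hXvi]; ring
  have hEl : ∀ f : R, E (ℓ f) = - i (X f) := by
    intro f; rw [hE, hXvl]
  have hEi : ∀ f : R, E (i f) = 0 := by
    intro f; rw [hE, hXvi, neg_zero]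
  -- transported algebraic identities in S
  have hiX : ∀ f g : R, i (X (ΛM f g)) = i (ΛM (X f) g) + i (ΛM f (X g)) := by
    intro f g; rw [hX, map_add]
  have hiskew : ∀ f g : R, i (ΛM f g) = - i (ΛM g f) := by
    intro f g; rw [hΛM_skew, map_neg]
  have hℓskew : ∀ f g : R, ℓ (ΛM f g) = - ℓ (ΛM g f) := by
    intro f g; rw [hΛM_skew, hℓ_neg]
  have hijac : ∀ f g h : R,
      i (ΛM (ΛM f g) h) + i (ΛM (ΛM g h) f) + i (ΛM (ΛM h f) g) = 0 := by
    intro f g h; rw [← map_add, ← map_add, hΛM_jac, map_zero]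
  have hℓjac : ∀ f g h : R,
      ℓ (ΛM (ΛM f g) h) + ℓ (ΛM (ΛM g h) f) + ℓ (ΛM (ΛM h f) g) = 0 := by
    intro f g h; rw [← hℓ_add, ← hℓ_add, hΛM_jac, hℓ0]
  have hΛM0l : ∀ v : R, ΛM 0 v = 0 := by
    intro v
    have h := hΛM_addl 0 0 v
    rw [add_zero] at h
    exact (add_eq_left.mp h.symm)
  have hΛM_negl : ∀ u v : R, ΛM (-u) v = - ΛM u v := by
    intro u v
    have h := hΛM_addl u (-u) v
    rw [add_neg_cancel, hΛM0l] at h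
    linear_combination -h
  have hiskew2 : ∀ f g h : R, i (ΛM (ΛM f g) h) = - i (ΛM (ΛM g f) h) := by
    intro f g h; rw [hΛM_skew f g, hΛM_negl, map_neg]
  -- the generic extension principle from generators to all of S
  have ext : ∀ (P : S → Prop), (∀ f : R, P (i f)) → (∀ f : R, P (ℓ f)) →
      (∀ a b : S, P a → P b → P (a + b)) → (∀ a b : S, P a → P b → P (a * b)) →
      ∀ x : S, P x := by
    intro P hPi hPl hPadd hPmul x
    have hx : x ∈ Algebra.adjoin ℝ (Set.range i ∪ Set.range ℓ) := by
      rw [hgen]; exact Algebra.mem_top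
    refine Algebra.adjoin_induction (p := fun y _ => P y) ?_ ?_ ?_ ?_ hx
    · rintro y (⟨f, rfl⟩ | ⟨f, rfl⟩)
      · exact hPi f
      · exact hPl f
    · intro r
      have h : (algebraMap ℝ S) r = i (algebraMap ℝ R r) := (i.commutes r).symm
      rw [h]; exact hPi _
    · intro a b _ _ ha hb; exact hPadd a b ha hb
    · intro a b _ _ ha hb; exact hPmul a b ha hb
  -- ### Part 2: the compatibility identity
  have cpt_skew : ∀ F G : S, cptS Λ E F G = - cptS Λ E G F := by
    intro F G
    simp only [cptS]
    rw [hΛ_skew F G, hEneg, hΛ_skew (E F) G, hΛ_skew F (E G)]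
    ring
  have cpt_addr : ∀ F a b : S, cptS Λ E F (a + b) = cptS Λ E F a + cptS Λ E F b := by
    intro F a b
    simp only [cptS, hΛaddr, hΛaddl, hEadd]
    ring
  have cpt_addl : ∀ a b G : S, cptS Λ E (a + b) G = cptS Λ E a G + cptS Λ E b G := by
    intro a b G
    rw [cpt_skew, cpt_addr, cpt_skew a G, cpt_skew b G]; ring
  have cpt_mulr : ∀ F a b : S, cptS Λ E F (a * b) = a * cptS Λ E F b + b * cptS Λ E F a := by
    intro F a b
    simp only [cptS, hΛmulr, hEadd, hEmul, hΛaddr]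
    ring
  have cpt_mull : ∀ a b G : S, cptS Λ E (a * b) G = a * cptS Λ E b G + b * cptS Λ E a G := by
    intro a b G
    rw [cpt_skew, cpt_mulr, cpt_skew b G, cpt_skew a G]; ring
  have cpt_ii : ∀ f g : R, cptS Λ E (i f) (i g) = 0 := by
    intro f g
    simp only [cptS, hΛii, hEi, hE0, hΛ0l, hΛ0r]
    ring
  have cpt_li : ∀ f g : R, cptS Λ E (ℓ f) (i g) = 0 := by
    intro f g
    simp only [cptS, hΛli, hEi, hEl, hΛnegl, hΛii, hΛ0r]
    ring
  have cpt_il : ∀ f g : R, cptS Λ E (i f) (ℓ g) = 0 := by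
    intro f g
    rw [cpt_skew, cpt_li, neg_zero]
  have cpt_ll : ∀ f g : R, cptS Λ E (ℓ f) (ℓ g) = 0 := by
    intro f g
    simp only [cptS, hΛll, sub_eq_add_neg, hEadd, hEneg, hEmul, hEl, hEi, hΛnegl,
      hΛnegr, hΛaddl, hΛaddr, hΛil, hΛli, hΛii, hΛmull, hΛmulr, hiX]
    linear_combination -hiskew g (X f)
  have cpt_all : ∀ F G : S, cptS Λ E F G = 0 := by
    have base : ∀ F₀ : S, (∀ g : R, cptS Λ E F₀ (i g) = 0) →
        (∀ g : R, cptS Λ E F₀ (ℓ g) = 0) → ∀ G, cptS Λ E F₀ G = 0 := by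
      intro F₀ h1 h2
      refine ext _ h1 h2 ?_ ?_
      · intro a b ha hb; rw [cpt_addr, ha, hb, add_zero]
      · intro a b ha hb; rw [cpt_mulr, ha, hb]; ring
    refine ext (fun F => ∀ G, cptS Λ E F G = 0) ?_ ?_ ?_ ?_
    · intro f; exact base _ (fun g => cpt_ii f g) (fun g => cpt_il f g)
    · intro f; exact base _ (fun g => cpt_li f g) (fun g => cpt_ll f g)
    · intro a b ha hb G; rw [cpt_addl, ha, hb, add_zero]
    · intro a b ha hb G; rw [cpt_mull, ha, hb]; ring
  -- ### Part 1: the Jacobi identity with background term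
  have jac_cyc : ∀ F G H : S, jacS Λ E F G H = jacS Λ E G H F := by
    intro F G H; simp only [jacS]; ring
  have jac_swap23 : ∀ F G H : S, jacS Λ E F H G = - jacS Λ E F G H := by
    intro F G H
    simp only [jacS]
    rw [hΛ_skew F H, hΛ_skew H G, hΛ_skew G F, hΛnegl, hΛnegl, hΛnegl]
    ring
  have jac_add3 : ∀ F G a b : S,
      jacS Λ E F G (a + b) = jacS Λ E F G a + jacS Λ E F G b := by
    intro F G a b
    simp only [jacS, hΛaddr, hΛaddl, hEadd]
    ring
  have jac_mul3 : ∀ F G a b : S,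
      jacS Λ E F G (a * b) = a * jacS Λ E F G b + b * jacS Λ E F G a := by
    intro F G a b
    simp only [jacS, hΛmulr, hΛmull, hΛaddl, hΛaddr, hEmul]
    linear_combination Λ a F * hΛ_skew G b + Λ b F * hΛ_skew G a
  -- core generator computations
  have jb_iii : ∀ f g h : R, jacS Λ E (i f) (i g) (i h) = 0 := by
    intro f g h
    simp only [jacS, hΛii, hΛ0l, hΛ0r, hEi]
    ring
  have jb_lii : ∀ f g h : R, jacS Λ E (ℓ f) (i g) (i h) = 0 := by
    intro f g h
    simp only [jacS, hΛli, hΛii, hΛil, hΛ0l, hΛ0r, hΛnegl, hEi, hEl]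
    ring
  have jb_lli : ∀ f g h : R, jacS Λ E (ℓ f) (ℓ g) (i h) = 0 := by
    intro f g h
    simp only [jacS, sub_eq_add_neg, hΛll, hΛli, hΛil, hΛii, hEl, hEi, hΛnegl, hΛnegr,
      hΛaddl, hΛaddr, hΛmull, hΛmulr, hEadd, hEneg, hEmul, hE0, hΛ0l, hΛ0r, hiX]
    linear_combination hijac f g h - hiskew f (ΛM g h) + hiskew g (ΛM f h)
      - hiskew2 f h g
  have jb_lll : ∀ f g h : R, jacS Λ E (ℓ f) (ℓ g) (ℓ h) = 0 := by
    intro f g h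
    simp only [jacS, sub_eq_add_neg, hΛll, hΛli, hΛil, hΛii, hEl, hEi, hΛnegl, hΛnegr,
      hΛaddl, hΛaddr, hΛmull, hΛmulr, hEadd, hEneg, hEmul, hE0, hΛ0l, hΛ0r, hiX]
    rw [hiskew h (X g), hiskew f (X g), hiskew g (X h), hiskew f (X h),
      hiskew h (X f), hiskew g (X f), hℓskew g f, hℓskew h g, hℓskew h f]
    linear_combination hℓjac f g h
  -- assemble all eight generator cases
  have jb_iil : ∀ f g h : R, jacS Λ E (i f) (i g) (ℓ h) = 0 := by
    intro f g h; rw [jac_cyc, jac_cyc, jb_lii]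
  have jb_ili : ∀ f g h : R, jacS Λ E (i f) (ℓ g) (i h) = 0 := by
    intro f g h; rw [jac_cyc, jb_lii]
  have jb_ill : ∀ f g h : R, jacS Λ E (i f) (ℓ g) (ℓ h) = 0 := by
    intro f g h; rw [jac_cyc, jb_lli]
  have jb_lil : ∀ f g h : R, jacS Λ E (ℓ f) (i g) (ℓ h) = 0 := by
    intro f g h; rw [jac_swap23, jb_lli, neg_zero]
  -- extension to all of S
  have jacD : ∀ F G : S, (∀ h : R, jacS Λ E F G (i h) = 0) →
      (∀ h : R, jacS Λ E F G (ℓ h) = 0) → ∀ H, jacS Λ E F G H = 0 := by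
    intro F G h1 h2
    refine ext _ h1 h2 ?_ ?_
    · intro a b ha hb; rw [jac_add3, ha, hb, add_zero]
    · intro a b ha hb; rw [jac_mul3, ha, hb]; ring
  have jacD2 : ∀ F : S, (∀ g : R, ∀ H, jacS Λ E F (i g) H = 0) →
      (∀ g : R, ∀ H, jacS Λ E F (ℓ g) H = 0) → ∀ G H, jacS Λ E F G H = 0 := by
    intro F h1 h2
    refine ext (fun G => ∀ H, jacS Λ E F G H = 0) h1 h2 ?_ ?_
    · intro a b ha hb H
      rw [jac_cyc, jac_cyc, jac_add3, ← jac_cyc a H F, ← jac_cyc F a H,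
        ← jac_cyc b H F, ← jac_cyc F b H, ha H, hb H, add_zero]
    · intro a b ha hb H
      rw [jac_cyc, jac_cyc, jac_mul3, ← jac_cyc a H F, ← jac_cyc F a H,
        ← jac_cyc b H F, ← jac_cyc F b H, ha H, hb H]
      ring
  have jac_all : ∀ F G H : S, jacS Λ E F G H = 0 := by
    refine ext (fun F => ∀ G H, jacS Λ E F G H = 0) ?_ ?_ ?_ ?_
    · intro f
      exact jacD2 _ (fun g => jacD _ _ (jb_iii f g) (jb_iil f g))
        (fun g => jacD _ _ (jb_ili f g) (jb_ill f g))
    · intro f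
      exact jacD2 _ (fun g => jacD _ _ (jb_lii f g) (jb_lil f g))
        (fun g => jacD _ _ (jb_lli f g) (jb_lll f g))
    · intro a b ha hb G H
      rw [jac_cyc, jac_add3, ← jac_cyc a G H, ← jac_cyc b G H, ha, hb, add_zero]
    · intro a b ha hb G H
      rw [jac_cyc, jac_mul3, ← jac_cyc a G H, ← jac_cyc b G H, ha, hb]
      ring
  constructor
  · intro F G H
    have h := jac_all F G H
    simp only [jacS, sub_eq_zero] at h
    rw [h]
  · intro F G
    have h := cpt_all F G
    simpa [cptS] using h
end

section
/- Let (A, [[,]], ρ) be a Lie algebroid over M and φ ∈ Γ(A*) a 1-cocycle. On the vector bundle Â = A × ℝ → M × ℝ, whose sections are time-dependent sections of A, the operations [[μ̂,η̂]]^ = e^{-t}( [[μ̂,η̂]] + φ(μ̂)(dη̂/dt - η̂) - φ(η̂)(dμ̂/dt - μ̂) ) and ρ̂(μ̂) = e^{-t}( ρ(μ̂) + φ(μ̂) ∂/∂t ) define a Lie algebroid structure on Â → M × ℝ. -/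
/-- **Example 6 of the paper.**  Let `(A, [[,]], ρ)` be a Lie algebroid
over `M` and `φ ∈ Γ(A*)` a 1-cocycle.  On the vector bundle `Â = A × ℝ → M × ℝ`, whose
sections are the time-dependent sections of `A`, the operations
`[[μ̂,η̂]]^ = e^{-t}([[μ̂,η̂]] + φ(μ̂)(dη̂/dt - η̂) - φ(η̂)(dμ̂/dt - μ̂))` and
`ρ̂(μ̂) = e^{-t}(ρ(μ̂) + φ(μ̂) ∂/dt)` define a Lie algebroid structure on
`Â → M × ℝ`.  Algebraically: `Rh = C^∞(M × ℝ)`, `Lh = Γ(Â)` (time-dependent sections),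
`br`/`ρh`/`φh` are the slicewise extensions `[[μ̂,η̂]](x,t) = [[μ̂_t,η̂_t]](x)` etc.
(which form a Lie algebroid over `M × ℝ` with slicewise 1-cocycle `φh`), `dt` is
`∂/dt` on `Rh`, `Dt` is the time derivative `d/dt` on sections, and `u = e^{-t}`. -/
theorem time_dependent_lie_algebroid
    {Rh : Type*} [CommRing Rh] [Algebra ℝ Rh]
    {Lh : Type*} [AddCommGroup Lh] [Module Rh Lh]
    -- the slicewise Lie algebroid structure on `Â → M × ℝ`
    (br : Lh → Lh → Lh) (ρh : Lh → Rh → Rh)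
    (hbr_addl : ∀ μ₁ μ₂ η : Lh, br (μ₁ + μ₂) η = br μ₁ η + br μ₂ η)
    (hbr_addr : ∀ μ η₁ η₂ : Lh, br μ (η₁ + η₂) = br μ η₁ + br μ η₂)
    (hbr_alt : ∀ μ : Lh, br μ μ = 0)
    (hbr_jac : ∀ μ η ζ : Lh, br μ (br η ζ) + br η (br ζ μ) + br ζ (br μ η) = 0)
    (hρ_add : ∀ (μ₁ μ₂ : Lh) (a : Rh), ρh (μ₁ + μ₂) a = ρh μ₁ a + ρh μ₂ a)
    (hρ_lin : ∀ (a : Rh) (μ : Lh) (b : Rh), ρh (a • μ) b = a * ρh μ b)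
    (hρ_der_add : ∀ (μ : Lh) (a b : Rh), ρh μ (a + b) = ρh μ a + ρh μ b)
    (hρ_der_mul : ∀ (μ : Lh) (a b : Rh), ρh μ (a * b) = a * ρh μ b + b * ρh μ a)
    (hρ_hom : ∀ (μ η : Lh) (a : Rh), ρh (br μ η) a = ρh μ (ρh η a) - ρh η (ρh μ a))
    (hleib : ∀ (μ : Lh) (a : Rh) (η : Lh), br μ (a • η) = a • br μ η + ρh μ a • η)
    -- the slicewise extension of the 1-cocycle `φ`
    (φh : Lh → Rh)
    (hφ_add : ∀ μ η : Lh, φh (μ + η) = φh μ + φh η)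
    (hφ_lin : ∀ (a : Rh) (μ : Lh), φh (a • μ) = a * φh μ)
    (hcoc : ∀ μ η : Lh, φh (br μ η) = ρh μ (φh η) - ρh η (φh μ))
    -- the vector field `∂/dt` on `M × ℝ` and the time derivative on sections
    (dt : Derivation ℝ Rh Rh) (Dt : Lh → Lh)
    (hDt_add : ∀ μ η : Lh, Dt (μ + η) = Dt μ + Dt η)
    (hDt_smul : ∀ (a : Rh) (μ : Lh), Dt (a • μ) = dt a • μ + a • Dt μ)
    (hbrDt : ∀ μ η : Lh, Dt (br μ η) = br (Dt μ) η + br μ (Dt η))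
    (hρDt : ∀ (μ : Lh) (a : Rh), dt (ρh μ a) = ρh (Dt μ) a + ρh μ (dt a))
    (hφDt : ∀ μ : Lh, dt (φh μ) = φh (Dt μ))
    -- the function `u = e^{-t}`
    (u : Rh) (hu : dt u = -u) (hρu : ∀ μ : Lh, ρh μ u = 0)
    -- the modified operations
    (nbr : Lh → Lh → Lh) (nρ : Lh → Rh → Rh)
    (hnbr : ∀ μ η : Lh,
      nbr μ η = u • (br μ η + φh μ • (Dt η - η) - φh η • (Dt μ - μ)))
    (hnρ : ∀ (μ : Lh) (a : Rh), nρ μ a = u * (ρh μ a + φh μ * dt a)) :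
    -- `(nbr, nρ)` is a Lie algebroid structure on `Â → M × ℝ`
    (∀ μ₁ μ₂ η : Lh, nbr (μ₁ + μ₂) η = nbr μ₁ η + nbr μ₂ η) ∧
    (∀ μ η₁ η₂ : Lh, nbr μ (η₁ + η₂) = nbr μ η₁ + nbr μ η₂) ∧
    (∀ μ : Lh, nbr μ μ = 0) ∧
    (∀ μ η ζ : Lh, nbr μ (nbr η ζ) + nbr η (nbr ζ μ) + nbr ζ (nbr μ η) = 0) ∧
    (∀ (μ₁ μ₂ : Lh) (a : Rh), nρ (μ₁ + μ₂) a = nρ μ₁ a + nρ μ₂ a) ∧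
    (∀ (a : Rh) (μ : Lh) (b : Rh), nρ (a • μ) b = a * nρ μ b) ∧
    (∀ (μ : Lh) (a b : Rh), nρ μ (a + b) = nρ μ a + nρ μ b) ∧
    (∀ (μ : Lh) (a b : Rh), nρ μ (a * b) = a * nρ μ b + b * nρ μ a) ∧
    (∀ (μ η : Lh) (a : Rh), nρ (nbr μ η) a = nρ μ (nρ η a) - nρ η (nρ μ a)) ∧
    (∀ (μ : Lh) (a : Rh) (η : Lh), nbr μ (a • η) = a • nbr μ η + nρ μ a • η) := by
  -- derived subtraction/zero lemmas
  have hbr_subr : ∀ μ η₁ η₂ : Lh, br μ (η₁ - η₂) = br μ η₁ - br μ η₂ :=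
    fun μ η₁ η₂ => map_sub (AddMonoidHom.mk' (br μ) (hbr_addr μ)) η₁ η₂
  have hbr_subl : ∀ μ₁ μ₂ η : Lh, br (μ₁ - μ₂) η = br μ₁ η - br μ₂ η :=
    fun μ₁ μ₂ η => map_sub (AddMonoidHom.mk' (fun m => br m η) (fun a b => hbr_addl a b η)) μ₁ μ₂
  have hbr_zr : ∀ μ : Lh, br μ 0 = 0 := fun μ => map_zero (AddMonoidHom.mk' (br μ) (hbr_addr μ))
  have hbr_zl : ∀ η : Lh, br 0 η = 0 :=
    fun η => map_zero (AddMonoidHom.mk' (fun m => br m η) (fun a b => hbr_addl a b η))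
  have hbr_negr : ∀ μ η : Lh, br μ (-η) = -br μ η :=
    fun μ η => map_neg (AddMonoidHom.mk' (br μ) (hbr_addr μ)) η
  have hbr_negl : ∀ μ η : Lh, br (-μ) η = -br μ η :=
    fun μ η => map_neg (AddMonoidHom.mk' (fun m => br m η) (fun a b => hbr_addl a b η)) μ
  have hφ_sub : ∀ μ η : Lh, φh (μ - η) = φh μ - φh η :=
    fun μ η => map_sub (AddMonoidHom.mk' φh hφ_add) μ η
  have hφ_zero : φh (0 : Lh) = 0 := map_zero (AddMonoidHom.mk' φh hφ_add)
  have hDt_sub : ∀ μ η : Lh, Dt (μ - η) = Dt μ - Dt η :=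
    fun μ η => map_sub (AddMonoidHom.mk' Dt hDt_add) μ η
  have hDt_zero : Dt (0 : Lh) = 0 := map_zero (AddMonoidHom.mk' Dt hDt_add)
  have hρ_subl : ∀ (μ₁ μ₂ : Lh) (a : Rh), ρh (μ₁ - μ₂) a = ρh μ₁ a - ρh μ₂ a :=
    fun μ₁ μ₂ a => map_sub (AddMonoidHom.mk' (fun m => ρh m a) (fun x y => hρ_add x y a)) μ₁ μ₂
  have hρ_zl : ∀ a : Rh, ρh (0 : Lh) a = 0 :=
    fun a => map_zero (AddMonoidHom.mk' (fun m => ρh m a) (fun x y => hρ_add x y a))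
  have hρ_der_sub : ∀ (μ : Lh) (a b : Rh), ρh μ (a - b) = ρh μ a - ρh μ b :=
    fun μ a b => map_sub (AddMonoidHom.mk' (ρh μ) (hρ_der_add μ)) a b
  have hρ_der_neg : ∀ (μ : Lh) (a : Rh), ρh μ (-a) = -ρh μ a :=
    fun μ a => map_neg (AddMonoidHom.mk' (ρh μ) (hρ_der_add μ)) a
  have hρ_zr : ∀ μ : Lh, ρh μ (0 : Rh) = 0 :=
    fun μ => map_zero (AddMonoidHom.mk' (ρh μ) (hρ_der_add μ))
  -- skew symmetry
  have hskew : ∀ μ η : Lh, br η μ = -br μ η := by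
    intro μ η
    have h := hbr_alt (μ + η)
    rw [hbr_addl, hbr_addr, hbr_addr, hbr_alt, hbr_alt, zero_add, add_zero] at h
    exact eq_neg_of_add_eq_zero_right h
  -- leibniz in left argument
  have hleibl : ∀ (a : Rh) (μ η : Lh), br (a • μ) η = a • br μ η - ρh η a • μ := by
    intro a μ η
    rw [hskew η (a • μ), hleib, hskew μ η]
    module
  -- ρ of Dt μ kills u
  have hρDtu : ∀ μ : Lh, ρh (Dt μ) u = 0 := by
    intro μ
    have h := hρDt μ u
    rw [hρu μ, map_zero, hu, hρ_der_neg] at h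
    linear_combination hρu μ - h
  refine ⟨?_, ?_, ?_, ?_, ?_, ?_, ?_, ?_, ?_, ?_⟩
  · intro μ₁ μ₂ η
    simp only [hnbr, hbr_addl, hφ_add, hDt_add, add_smul]
    module
  · intro μ η₁ η₂
    simp only [hnbr, hbr_addr, hφ_add, hDt_add, add_smul]
    module
  · intro μ
    simp only [hnbr, hbr_alt]
    module
  · intro μ η ζ
    simp only [hnbr, hbr_addl, hbr_addr, hbr_subl, hbr_subr, hbr_alt, hbr_zl, hbr_zr,
      hleib, hleibl, hρ_add, hρ_subl, hρ_zl, hρ_lin, hρ_der_add, hρ_der_sub,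
      hρ_der_neg, hρ_zr, hρ_der_mul, hρ_hom, hφ_add, hφ_sub, hφ_zero, hφ_lin, hcoc,
      hDt_add, hDt_sub, hDt_zero, hDt_smul, hbrDt, hρDt, hφDt, hu, hρu,
      Derivation.leibniz, map_add, map_sub, map_neg, map_zero, smul_eq_mul,
      smul_add, smul_sub, smul_neg, smul_smul, smul_zero, zero_smul, neg_smul,
      mul_zero, zero_mul, add_zero, zero_add, neg_zero, sub_zero, neg_neg]
    have hjac3 : br μ (br η ζ) - br η (br μ ζ) + br ζ (br μ η) = 0 := by
      have h := hbr_jac μ η ζ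
      rw [hskew μ ζ, hbr_negr] at h
      linear_combination (norm := module) h
    simp only [hskew μ η, hskew μ ζ, hskew η ζ, hskew (Dt μ) η, hskew (Dt μ) ζ,
      hskew (Dt η) μ, hskew (Dt η) ζ, hskew (Dt ζ) μ, hskew (Dt ζ) η,
      hskew (Dt μ) μ, hskew (Dt η) η, hskew (Dt ζ) ζ, hbr_negr, hbr_negl,
      smul_neg, neg_neg]
    linear_combination (norm := module) (u*u) • hjac3
  · intro μ₁ μ₂ a
    simp only [hnρ, hρ_add, hφ_add]
    ring
  · intro a μ b
    simp only [hnρ, hρ_lin, hφ_lin]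
    ring
  · intro μ a b
    simp only [hnρ, hρ_der_add, map_add]
    ring
  · intro μ a b
    simp only [hnρ, hρ_der_mul, Derivation.leibniz, smul_eq_mul]
    ring
  · intro μ η a
    simp only [hnρ, hnbr, hφ_lin, hφ_add, hφ_sub, hcoc, hφDt, hρ_lin, hρ_add,
      hρ_subl, hρ_der_add, hρ_der_sub, hρ_der_mul, hρ_hom, hρDt, hρu, hu,
      Derivation.leibniz, map_add, map_sub, map_neg, smul_eq_mul, mul_zero, zero_mul,
      add_zero, zero_add, neg_zero, sub_zero]
    ring
  · intro μ a η
    simp only [hnbr, hnρ, hleib, hφ_lin, hDt_smul, smul_add, smul_sub, smul_smul,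
      hρu, zero_smul, add_zero]
    module
end
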